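/- Let Q be a standard Young tableau with n cells and a < u < b ≤ n. Then u is a descent of Q if and only if u-1 is a descent of ∂_a^b Q, where ∂_a^b is the promotion operator applied to the skew subtableau of values in [a,b]. -/

import Mathlib

open scoped Classical

/-- Successor in `Fin n` (cyclic, but only used under the guard `i+1 < n`). -/
def finSucc {n : ℕ} (i : Fin n) : Fin n := ⟨((i : ℕ) + 1) % n, Nat.mod_lt _ i.pos⟩

def pDes {n : ℕ} (π : Equiv.Perm (Fin n)) : Finset (Fin n) :=
  Finset.univ.filter fun i => (i : ℕ) + 1 < n ∧ π (finSucc i) < π i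

/-- The inverse `J`-class `R_J^{-1} = {σ : Des σ⁻¹ ⊆ J}`, as a multiset. -/
noncomputable def RinvM (n : ℕ) (J : Finset (Fin n)) : Multiset (Equiv.Perm (Fin n)) :=
  (Finset.univ.filter fun σ : Equiv.Perm (Fin n) => pDes σ⁻¹ ⊆ J).val

/-- Product of multisets of permutations (with multiplicity). -/
def mprod {n : ℕ} (A B : Multiset (Equiv.Perm (Fin n))) : Multiset (Equiv.Perm (Fin n)) :=
  A.bind fun a => B.map fun b => a * b

/-- The composition `co(J)` of `n` corresponding to `J ⊆ [n-1]`, as a list of parts. -/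
def compList (n : ℕ) (J : Finset (Fin n)) : List ℕ :=
  let l := (J.sort (· ≤ ·)).map fun i => (i : ℕ) + 1
  List.zipWith (· - ·) (l ++ [n]) (0 :: l)

/-- `co(J)` as a multiset of parts (so `compM n J = compM n K` means `J ∼ K`). -/
def compM (n : ℕ) (J : Finset (Fin n)) : Multiset ℕ := (compList n J : Multiset ℕ)
/-- A standard Young tableau with `n` cells: a Young diagram filled bijectively
with the values `1, …, n`, strictly increasing along rows and columns.
Cells outside the diagram carry the value `0`. -/
structure SYT (n : ℕ) where
  shape : YoungDiagram
  val : ℕ × ℕ → ℕ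
  zero_of_not_mem : ∀ c, c ∉ shape → val c = 0
  bijOn : Set.BijOn val shape.cells (Finset.Icc 1 n)
  row_lt : ∀ i j : ℕ, (i, j + 1) ∈ shape → val (i, j) < val (i, j + 1)
  col_lt : ∀ i j : ℕ, (i + 1, j) ∈ shape → val (i, j) < val (i + 1, j)

/-- The descent set of a standard Young tableau: `u ∈ Des Q` iff `u+1` lies in a
strictly lower row than `u` (rows indexed by the first coordinate). -/
noncomputable def SYT.des {n : ℕ} (Q : SYT n) : Finset ℕ :=
  (Finset.Icc 1 (n - 1)).filter fun u =>
    ∃ c ∈ Q.shape, ∃ d ∈ Q.shape, Q.val c = u ∧ Q.val d = u + 1 ∧ c.1 < d.1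

/-- `path` is the maximal promotion path of the value `a` in the skew subtableau of `Q`
formed by the values in `[a,b]`: it starts at the box containing `a`, and repeatedly
moves to whichever of the boxes immediately below or to the right holds the smaller
value among those inside the skew region, stopping when no such box exists. -/
def IsPromPath {n : ℕ} (Q : SYT n) (a b : ℕ) (path : List (ℕ × ℕ)) : Prop :=
  path ≠ [] ∧
  (∀ c ∈ path, c ∈ Q.shape ∧ Q.val c ∈ Finset.Icc a b) ∧
  (∃ c, path.head? = some c ∧ Q.val c = a) ∧
  (path.Chain' fun c d =>
    (d = (c.1 + 1, c.2) ∨ d = (c.1, c.2 + 1)) ∧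
    ∀ e, (e = (c.1 + 1, c.2) ∨ e = (c.1, c.2 + 1)) → e ∈ Q.shape →
      Q.val e ∈ Finset.Icc a b → Q.val d ≤ Q.val e) ∧
  (∀ last, path.getLast? = some last →
    ∀ e, (e = (last.1 + 1, last.2) ∨ e = (last.1, last.2 + 1)) → e ∈ Q.shape →
      Q.val e ∉ Finset.Icc a b)

/-- `IsPromotion a b Q Q'` holds iff `Q' = ∂_a^b Q`: delete the value `a`, slide the
values along the promotion path, place `b+1` in the vacated final box, and decrement
every value of the skew region (now `[a+1, b+1]`) by `1`. -/
def IsPromotion {n : ℕ} (a b : ℕ) (Q Q' : SYT n) : Prop :=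
  Q'.shape = Q.shape ∧ ∃ path, IsPromPath Q a b path ∧
    (∀ i (h : i + 1 < path.length),
      Q'.val (path.get ⟨i, Nat.lt_of_succ_lt h⟩) = Q.val (path.get ⟨i + 1, h⟩) - 1) ∧
    (∀ last, path.getLast? = some last → Q'.val last = b) ∧
    (∀ c ∈ Q.shape, c ∉ path →
      Q'.val c = if Q.val c ∈ Finset.Icc (a + 1) b then Q.val c - 1 else Q.val c)

/-- `IsPromSeq vs Q Q'` holds iff `Q' = ∂_{v_1}^{n-m+1} ∘ ⋯ ∘ ∂_{v_m}^{n} Q` where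
`vs = [v_1 < … < v_m]`, i.e. `Q' = ∂_V Q` in the notation of the paper (with `m = n - k`). -/
def IsPromSeq {n : ℕ} (vs : List ℕ) (Q Q' : SYT n) : Prop :=
  ∃ Qs : ℕ → SYT n, Qs 0 = Q ∧ Qs vs.length = Q' ∧
    ∀ t (h : t < vs.length),
      IsPromotion (vs.get ⟨vs.length - 1 - t, by omega⟩) (n - t) (Qs t) (Qs (t + 1))

/-!
Promotion sends each value `v ∈ [a+1, b]` of `Q` to a cell holding `v - 1` in `∂_a^b Q`: the
cell of `v` itself when it is off the promotion path, and otherwise the path cell preceding it,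
one step above or to the left. So the cells of `u - 1, u` in `∂_a^b Q` are those of `u, u + 1`
in `Q`, possibly shifted back along the path, and one checks that the shifts never change
which of the two lies in a lower row. If both cells are on the path they are consecutive on it,
and the path cannot turn between consecutive values. If only one is, the choice of the smaller
neighbour at each step of the path excludes the configurations in which a vertical shift would
cross the row of the other cell.
-/

namespace SYT

variable {n : ℕ} (Q : SYT n)

theorem val_injOn {c d : ℕ × ℕ} (hc : c ∈ Q.shape) (hd : d ∈ Q.shape)
    (h : Q.val c = Q.val d) : c = d :=
  Q.bijOn.injOn (by simpa using hc) (by simpa using hd) h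

theorem exists_val_eq {v : ℕ} (h1 : 1 ≤ v) (hv : v ≤ n) : ∃ c ∈ Q.shape, Q.val c = v := by
  obtain ⟨c, hc, rfl⟩ := Q.bijOn.surjOn (show v ∈ (Finset.Icc 1 n : Set ℕ) by simp [h1, hv])
  exact ⟨c, by simpa using hc, rfl⟩

theorem val_mem_Icc {c : ℕ × ℕ} (hc : c ∈ Q.shape) : Q.val c ∈ Finset.Icc 1 n := by
  simpa using Q.bijOn.mapsTo (by simpa using hc)

theorem val_le_val_of_snd_le {i j j' : ℕ} (hj : j ≤ j') (h : (i, j') ∈ Q.shape) :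
    Q.val (i, j) ≤ Q.val (i, j') := by
  induction j', hj using Nat.le_induction with
  | base => rfl
  | succ j' hj ih =>
    exact (ih (Q.shape.up_left_mem le_rfl j'.le_succ h)).trans (Q.row_lt i j' h).le

theorem val_le_val_of_fst_le {i i' j : ℕ} (hi : i ≤ i') (h : (i', j) ∈ Q.shape) :
    Q.val (i, j) ≤ Q.val (i', j) := by
  induction i', hi using Nat.le_induction with
  | base => rfl
  | succ i' hi ih =>
    exact (ih (Q.shape.up_left_mem i'.le_succ le_rfl h)).trans (Q.col_lt i' j h).le

theorem val_le_val {c d : ℕ × ℕ} (h : c ≤ d) (hd : d ∈ Q.shape) : Q.val c ≤ Q.val d :=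
  (Q.val_le_val_of_snd_le h.2 (Q.shape.up_left_mem h.1 le_rfl hd)).trans
    (Q.val_le_val_of_fst_le h.1 hd)

theorem val_lt_val {c d : ℕ × ℕ} (h : c < d) (hd : d ∈ Q.shape) : Q.val c < Q.val d :=
  (Q.val_le_val h.le hd).lt_of_ne fun hv =>
    h.ne (Q.val_injOn (Q.shape.up_left_mem h.le.1 h.le.2 hd) hd hv)

theorem snd_lt_snd_of_val_lt {c d : ℕ × ℕ} (hc : c ∈ Q.shape) (hrow : c.1 = d.1)
    (h : Q.val c < Q.val d) : c.2 < d.2 := by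
  by_contra! hle
  exact (Q.val_le_val (Prod.mk_le_mk.2 ⟨hrow.ge, hle⟩) hc).not_gt h

theorem eq_of_val_eq_succ_of_fst_eq {c d : ℕ × ℕ} (hc : c ∈ Q.shape) (hd : d ∈ Q.shape)
    (hrow : c.1 = d.1) (hv : Q.val d = Q.val c + 1) : d = (c.1, c.2 + 1) := by
  have hcol := Q.snd_lt_snd_of_val_lt hc hrow (by omega)
  have hle : ((c.1, c.2 + 1) : ℕ × ℕ) ≤ d := Prod.mk_le_mk.2 ⟨hrow.le, hcol⟩
  have hlt : c < (c.1, c.2 + 1) := Prod.lt_iff.2 (Or.inr ⟨le_rfl, Nat.lt_succ_self _⟩)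
  have := Q.val_lt_val hlt (Q.shape.isLowerSet hle hd)
  have := Q.val_le_val hle hd
  exact (Q.val_injOn (Q.shape.isLowerSet hle hd) hd (by omega)).symm

theorem mem_des_iff {c d : ℕ × ℕ} (hc : c ∈ Q.shape) (hd : d ∈ Q.shape)
    (hv : Q.val d = Q.val c + 1) : Q.val c ∈ Q.des ↔ c.1 < d.1 := by
  have := Finset.mem_Icc.1 (Q.val_mem_Icc hc)
  have := Finset.mem_Icc.1 (Q.val_mem_Icc hd)
  simp only [des, Finset.mem_filter, Finset.mem_Icc]
  constructor
  · rintro ⟨-, c', hc', d', hd', hc'v, hd'v, hlt⟩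
    rwa [Q.val_injOn hc' hc hc'v, Q.val_injOn hd' hd (by omega)] at hlt
  · exact fun hlt => ⟨by omega, c, hc, d, hd, rfl, hv, hlt⟩

end SYT

namespace IsPromPath

variable {n : ℕ} {Q : SYT n} {a b : ℕ} {path : List (ℕ × ℕ)}

theorem getElem_mem_shape (hp : IsPromPath Q a b path) {i : ℕ} (hi : i < path.length) :
    path[i] ∈ Q.shape :=
  (hp.2.1 _ (List.getElem_mem hi)).1

theorem val_getElem_mem_Icc (hp : IsPromPath Q a b path) {i : ℕ} (hi : i < path.length) :
    Q.val path[i] ∈ Finset.Icc a b :=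
  (hp.2.1 _ (List.getElem_mem hi)).2

theorem val_getElem_zero (hp : IsPromPath Q a b path) (h : 0 < path.length) :
    Q.val path[0] = a := by
  obtain ⟨c, hc, hca⟩ := hp.2.2.1
  rw [List.head?_eq_getElem?, List.getElem?_eq_getElem h, Option.some_inj] at hc
  rwa [hc]

theorem getElem_succ_eq (hp : IsPromPath Q a b path) {i : ℕ} (hi : i + 1 < path.length) :
    path[i + 1] = (path[i].1 + 1, path[i].2) ∨ path[i + 1] = (path[i].1, path[i].2 + 1) :=
  (hp.2.2.2.1.getElem i hi).1

theorem val_getElem_lt_succ (hp : IsPromPath Q a b path) {i : ℕ} (hi : i + 1 < path.length) :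
    Q.val path[i] < Q.val path[i + 1] := by
  refine Q.val_lt_val ?_ (hp.getElem_mem_shape hi)
  rcases hp.getElem_succ_eq hi with h | h <;> rw [h] <;> simp [Prod.lt_iff]

theorem val_getElem_lt_of_lt (hp : IsPromPath Q a b path) {i j : ℕ} (hij : i < j)
    (hj : j < path.length) : Q.val path[i] < Q.val path[j] := by
  induction j, hij using Nat.le_induction with
  | base => exact hp.val_getElem_lt_succ hj
  | succ j hij ih => exact (ih (by omega)).trans (hp.val_getElem_lt_succ hj)

theorem val_getElem_succ_le (hp : IsPromPath Q a b path) {i : ℕ} (hi : i + 1 < path.length)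
    {e : ℕ × ℕ} (he : e = (path[i].1 + 1, path[i].2) ∨ e = (path[i].1, path[i].2 + 1))
    (heS : e ∈ Q.shape) : Q.val path[i + 1] ≤ Q.val e := by
  have hlt : path[i] < e := by rcases he with rfl | rfl <;> simp [Prod.lt_iff]
  have := Finset.mem_Icc.1 (hp.val_getElem_mem_Icc (i := i) (by omega))
  have := Finset.mem_Icc.1 (hp.val_getElem_mem_Icc hi)
  by_cases heb : Q.val e ≤ b
  · have := Q.val_lt_val hlt heS
    exact (hp.2.2.2.1.getElem i hi).2 e he heS (Finset.mem_Icc.2 ⟨by omega, heb⟩)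
  · omega

theorem val_getElem_succ_lt (hp : IsPromPath Q a b path) {i : ℕ} (hi : i + 1 < path.length)
    {e : ℕ × ℕ} (he : e = (path[i].1 + 1, path[i].2) ∨ e = (path[i].1, path[i].2 + 1))
    (heS : e ∈ Q.shape) (hne : e ≠ path[i + 1]) : Q.val path[i + 1] < Q.val e :=
  (hp.val_getElem_succ_le hi he heS).lt_of_ne fun h =>
    hne (Q.val_injOn (hp.getElem_mem_shape hi) heS h).symm

theorem exists_getElem_succ_eq (hp : IsPromPath Q a b path) {c : ℕ × ℕ} (hc : c ∈ path)
    (hv : Q.val c ≠ a) : ∃ i, ∃ h : i + 1 < path.length, path[i + 1] = c := by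
  obtain ⟨_ | i, h, rfl⟩ := List.mem_iff_getElem.1 hc
  · exact absurd (hp.val_getElem_zero h) hv
  · exact ⟨i, h, rfl⟩

theorem eq_succ_of_val_eq_succ (hp : IsPromPath Q a b path) {i j : ℕ} (hi : i < path.length)
    (hj : j < path.length) (h : Q.val path[j] = Q.val path[i] + 1) : j = i + 1 := by
  have hij : i < j := by
    by_contra! hji
    rcases hji.lt_or_eq with hlt | rfl
    · have := hp.val_getElem_lt_of_lt hlt hi
      omega
    · omega
  by_contra hne
  have := hp.val_getElem_lt_of_lt (i := i + 1) (by omega) hj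
  have := hp.val_getElem_lt_succ (i := i) (by omega)
  omega

theorem mem_of_val_eq_succ (hp : IsPromPath Q a b path) {i : ℕ} (hi : i < path.length)
    {e : ℕ × ℕ} (he : e = (path[i].1 + 1, path[i].2) ∨ e = (path[i].1, path[i].2 + 1))
    (heS : e ∈ Q.shape) (hv : Q.val e = Q.val path[i] + 1) (hb : Q.val e ≤ b) : e ∈ path := by
  by_cases hnext : i + 1 < path.length
  · have := hp.val_getElem_succ_le hnext he heS
    have := hp.val_getElem_lt_succ hnext
    rw [Q.val_injOn heS (hp.getElem_mem_shape hnext) (by omega)]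
    exact List.getElem_mem hnext
  · have hlast : path.getLast? = some path[i] := by
      rw [List.getLast?_eq_getElem?, show path.length - 1 = i by omega,
        List.getElem?_eq_getElem hi]
    have := Finset.mem_Icc.1 (hp.val_getElem_mem_Icc hi)
    exact absurd (Finset.mem_Icc.2 ⟨by omega, hb⟩) (hp.2.2.2.2 _ hlast e he heS)

/-- A path never turns between two cells holding consecutive values: after the turn
`c → c + (1,0) → c + (1,1)` (or the mirror one), the other neighbour `c + (0,1)` of `c`
would hold a value strictly between them. -/
theorem fst_lt_iff_of_val_eq_succ (hp : IsPromPath Q a b path) {i : ℕ}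
    (hi : i + 2 < path.length) (hv : Q.val path[i + 2] = Q.val path[i + 1] + 1) :
    path[i].1 < path[i + 1].1 ↔ path[i + 1].1 < path[i + 2].1 := by
  have h1 := hp.getElem_succ_eq (i := i) (by omega)
  have h2 : path[i + 2] = (path[i + 1].1 + 1, path[i + 1].2) ∨
      path[i + 2] = (path[i + 1].1, path[i + 1].2 + 1) := hp.getElem_succ_eq hi
  suffices hturn : path[i + 2] ≠ (path[i].1 + 1, path[i].2 + 1) by
    simp only [Ne, Prod.ext_iff] at h1 h2 hturn
    omega
  intro hdiag
  obtain ⟨e, he, hne, hlt⟩ : ∃ e, (e = (path[i].1 + 1, path[i].2) ∨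
      e = (path[i].1, path[i].2 + 1)) ∧ e ≠ path[i + 1] ∧ e < path[i + 2] := by
    rcases h1 with h | h
    · exact ⟨_, Or.inr rfl, by rw [h]; simp, by rw [hdiag]; simp [Prod.lt_iff]⟩
    · exact ⟨_, Or.inl rfl, by rw [h]; simp, by rw [hdiag]; simp [Prod.lt_iff]⟩
  have hS := hp.getElem_mem_shape hi
  have := hp.val_getElem_succ_lt (by omega) he (Q.shape.isLowerSet hlt.le hS) hne
  have := Q.val_lt_val hlt hS
  omega

theorem fst_lt_iff_of_succ_notMem (hp : IsPromPath Q a b path) {i : ℕ}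
    (hi : i + 1 < path.length) {y : ℕ × ℕ} (hy : y ∈ Q.shape) (hyp : y ∉ path)
    (hv : Q.val y = Q.val path[i + 1] + 1) (hb : Q.val y ≤ b) :
    path[i + 1].1 < y.1 ↔ path[i].1 < y.1 := by
  have hrow : path[i + 1].1 ≠ y.1 := fun hrow => hyp <| hp.mem_of_val_eq_succ hi
    (Or.inr (Q.eq_of_val_eq_succ_of_fst_eq (hp.getElem_mem_shape hi) hy hrow hv)) hy hv hb
  rcases hp.getElem_succ_eq hi with h | h
  · rw [h] at hrow ⊢
    dsimp only at hrow ⊢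
    omega
  · rw [h]

theorem fst_lt_iff_of_pred_notMem (hp : IsPromPath Q a b path) {i : ℕ}
    (hi : i + 1 < path.length) {x : ℕ × ℕ} (hx : x ∈ Q.shape) (hxp : x ∉ path)
    (hv : Q.val path[i + 1] = Q.val x + 1) :
    x.1 < path[i + 1].1 ↔ x.1 < path[i].1 := by
  have hS := hp.getElem_mem_shape (i := i) (by omega)
  rcases hp.getElem_succ_eq hi with h | h
  · -- were `x` in the row of `path[i]`, the right neighbour of `path[i]` would be weakly left
    -- of `x`, with a value at most `Q x`, below that of the chosen step `path[i + 1]`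
    have hrow : x.1 ≠ path[i].1 := by
      intro hrow
      have hne : Q.val path[i] ≠ Q.val x := fun h' =>
        hxp (Q.val_injOn hS hx h' ▸ List.getElem_mem _)
      have := hp.val_getElem_lt_succ hi
      have hcol := Q.snd_lt_snd_of_val_lt hS hrow.symm (by omega)
      have hle : ((path[i].1, path[i].2 + 1) : ℕ × ℕ) ≤ x := Prod.mk_le_mk.2 ⟨hrow.ge, hcol⟩
      have := hp.val_getElem_succ_lt hi (Or.inr rfl) (Q.shape.isLowerSet hle hx)
        (by rw [h]; simp)
      have := Q.val_le_val hle hx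
      omega
    rw [h]
    dsimp only
    omega
  · rw [h]

end IsPromPath

theorem IsPromotion.exists_pred_cells {n : ℕ} {Q Q' : SYT n} {a b : ℕ}
    (hprom : IsPromotion a b Q Q') {x y : ℕ × ℕ} (hx : x ∈ Q.shape) (hy : y ∈ Q.shape)
    (hxy : Q.val y = Q.val x + 1) (hax : a < Q.val x) (hyb : Q.val y ≤ b) :
    ∃ x' ∈ Q.shape, ∃ y' ∈ Q.shape, Q'.val x' + 1 = Q.val x ∧ Q'.val y' + 1 = Q.val y ∧
      (x.1 < y.1 ↔ x'.1 < y'.1) := by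
  obtain ⟨-, path, hp, hslide, -, hoff⟩ := hprom
  have off : ∀ c ∈ Q.shape, c ∉ path → a < Q.val c → Q.val c ≤ b → Q'.val c + 1 = Q.val c :=
    fun c hc hcp hac hcb => by
      rw [hoff c hc hcp, if_pos (Finset.mem_Icc.2 ⟨hac, hcb⟩)]
      omega
  have slide : ∀ i (hi : i + 1 < path.length), Q'.val path[i] + 1 = Q.val path[i + 1] :=
    fun i hi => by
      have h := hslide i hi
      have := hp.val_getElem_lt_succ hi
      simp only [List.get_eq_getElem] at h
      omega
  by_cases hxp : x ∈ path <;> by_cases hyp : y ∈ path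
  · obtain ⟨i, hi, rfl⟩ := hp.exists_getElem_succ_eq hxp hax.ne'
    obtain ⟨j, hj, rfl⟩ := hp.exists_getElem_succ_eq hyp (by omega)
    obtain rfl : j = i + 1 := by have := hp.eq_succ_of_val_eq_succ hi hj hxy; omega
    exact ⟨_, hp.getElem_mem_shape (i := i) (by omega), _, hp.getElem_mem_shape hi,
      slide i hi, slide (i + 1) hj, (hp.fst_lt_iff_of_val_eq_succ hj hxy).symm⟩
  · obtain ⟨i, hi, rfl⟩ := hp.exists_getElem_succ_eq hxp hax.ne'
    exact ⟨_, hp.getElem_mem_shape (i := i) (by omega), y, hy, slide i hi,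
      off y hy hyp (by omega) hyb, hp.fst_lt_iff_of_succ_notMem hi hy hyp hxy hyb⟩
  · obtain ⟨i, hi, rfl⟩ := hp.exists_getElem_succ_eq hyp (by omega)
    exact ⟨x, hx, _, hp.getElem_mem_shape (i := i) (by omega), off x hx hxp hax (by omega),
      slide i hi, hp.fst_lt_iff_of_pred_notMem hi hx hxp hxy⟩
  · exact ⟨x, hx, y, hy, off x hx hxp hax (by omega), off y hy hyp (by omega) hyb, Iff.rfl⟩

theorem des_promotion_general (n : ℕ) (Q Q' : SYT n) (a u b : ℕ)
    (hau : a < u) (hub : u < b) (hbn : b ≤ n) (hprom : IsPromotion a b Q Q') :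
    u ∈ Q.des ↔ u - 1 ∈ Q'.des := by
  obtain ⟨x, hx, rfl⟩ := Q.exists_val_eq (v := u) (by omega) (by omega)
  obtain ⟨y, hy, hyv⟩ := Q.exists_val_eq (v := Q.val x + 1) (by omega) (by omega)
  obtain ⟨x', hx', y', hy', hx'v, hy'v, hrow⟩ :=
    hprom.exists_pred_cells hx hy hyv hau (by omega)
  rw [← hprom.1] at hx' hy'
  rw [Q.mem_des_iff hx hy hyv, show Q.val x - 1 = Q'.val x' by omega,
    Q'.mem_des_iff hx' hy' (by omega), hrow]

/-- For a standard Young tableau `Q` with `n` cells and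
`a < u < b ≤ n` (with `1 ≤ a`): `u` is a descent of `Q` iff `u - 1` is a descent of
`∂_a^b Q`. -/
theorem des_promotion (n : ℕ) (Q Q' : SYT n) (a u b : ℕ) (ha : 1 ≤ a)
    (hau : a < u) (hub : u < b) (hbn : b ≤ n) (hprom : IsPromotion a b Q Q') :
    u ∈ Q.des ↔ u - 1 ∈ Q'.des :=
  des_promotion_general n Q Q' a u b hau hub hbn hprom
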